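/- For each integer d ≥ 0 define a_d = d · (1/3) · Σ_{i=⌊d/2⌋}^{d} C(d−1, i) (1/3)^i (2/3)^{d−1−i}. Then 2·a_d < 0.98 for every even d, for d = 1, and for every odd d ≥ 29. -/

import Mathlib

/-!
Write `a_d = d/3 · P(Bin(d - 1, 1/3) ≥ ⌊d/2⌋)`. Beyond the mode the ratio of consecutive terms
of `Bin(n, 1/3)` is `(n - i) / (2 (i + 1)) ≤ 1/2`, so the tail is at most twice its first term
and `2 a_d ≤ 4/3 · d · C(d-1, ⌊d/2⌋) 3^{-⌊d/2⌋} (2/3)^{d-1-⌊d/2⌋}`. Passing from `d` to `d + 2`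
multiplies this bound by at most `8 (d + 1) / (9 d) ≤ 1` once `d ≥ 8`, so it only has to be
evaluated at `d = 24` and `d = 33`; the remaining degrees `d ≤ 22`, `29`, `31` are computed
exactly.
-/

/-- The coefficient `a_d = d · (1/3) · Σ_{i=⌊d/2⌋}^{d} C(d−1, i) (1/3)^i (2/3)^{d−1−i}`.
(Binomial coefficients out of range are zero; in particular `a_0 = 0`.) -/
noncomputable def aCoef (d : ℕ) : ℝ :=
  (d : ℝ) * (1 / 3) *
    ∑ i ∈ Finset.Icc (d / 2) d,
      (Nat.choose (d - 1) i : ℝ) * (1 / 3 : ℝ) ^ i * (2 / 3 : ℝ) ^ (d - 1 - i)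

open Finset

theorem sum_Icc_le_two_mul_of_succ_le_half {f : ℕ → ℝ} {m : ℕ} (hf : ∀ i, 0 ≤ f i)
    (hsucc : ∀ i, m ≤ i → f (i + 1) ≤ f i / 2) (N : ℕ) :
    ∑ i ∈ Icc m N, f i ≤ 2 * f m := by
  rcases lt_or_ge N m with hN | hN
  · rw [Icc_eq_empty_of_lt hN, sum_empty]
    linarith [hf m]
  suffices ∑ i ∈ Icc m N, f i + f N ≤ 2 * f m by linarith [hf N]
  induction N, hN using Nat.le_induction with
  | base => rw [Icc_self, sum_singleton]; linarith
  | succ N hmN ih =>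
    rw [sum_Icc_succ_top (by omega)]
    linarith [hsucc N hmN]

noncomputable def binomTerm (n i : ℕ) : ℝ :=
  n.choose i * (1 / 3 : ℝ) ^ i * (2 / 3 : ℝ) ^ (n - i)

theorem binomTerm_nonneg (n i : ℕ) : 0 ≤ binomTerm n i := by
  unfold binomTerm; positivity

theorem binomTerm_succ_le_half {n i : ℕ} (h : n ≤ 2 * i + 1) :
    binomTerm n (i + 1) ≤ binomTerm n i / 2 := by
  rcases le_or_gt n i with hni | hni
  · rw [binomTerm, Nat.choose_eq_zero_of_lt (by omega : n < i + 1)]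
    linarith [binomTerm_nonneg n i]
  have hchoose : (n.choose (i + 1) : ℝ) ≤ n.choose i := by
    have hmul : n.choose (i + 1) * (i + 1) ≤ n.choose i * (i + 1) := by
      rw [Nat.choose_succ_right_eq]
      exact Nat.mul_le_mul_left _ (by omega)
    exact_mod_cast Nat.le_of_mul_le_mul_right hmul i.succ_pos
  rw [binomTerm, binomTerm, show n - i = n - (i + 1) + 1 by omega]
  calc (n.choose (i + 1) : ℝ) * (1 / 3) ^ (i + 1) * (2 / 3) ^ (n - (i + 1))
      ≤ n.choose i * (1 / 3) ^ (i + 1) * (2 / 3) ^ (n - (i + 1)) := by gcongr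
    _ = n.choose i * (1 / 3) ^ i * (2 / 3) ^ (n - (i + 1) + 1) / 2 := by ring

theorem binomTerm_add_two (n m : ℕ) (hm : m ≤ n) :
    binomTerm (n + 2) (m + 1) * ((m + 1) * (n + 1 - m : ℕ)) =
      2 / 9 * ((n + 2) * (n + 1)) * binomTerm n m := by
  have hchoose : (n + 2).choose (m + 1) * ((m + 1) * (n + 1 - m)) =
      (n + 2) * (n + 1) * n.choose m := by
    have h1 := Nat.add_one_mul_choose_eq (n + 1) m
    have h2 := Nat.choose_mul_succ_eq n m
    calc (n + 2).choose (m + 1) * ((m + 1) * (n + 1 - m))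
        = ((n + 1 + 1).choose (m + 1) * (m + 1)) * (n + 1 - m) := by ring
      _ = (n + 2) * (n.choose m * (n + 1)) := by rw [← h1, h2]; ring
      _ = _ := by ring
  have hchooseR : ((n + 2).choose (m + 1) : ℝ) * ((m + 1) * (n + 1 - m : ℕ)) =
      (n + 2) * (n + 1) * n.choose m := by exact_mod_cast hchoose
  rw [binomTerm, binomTerm, show n + 2 - (m + 1) = n - m + 1 by omega]
  linear_combination (1 / 3 : ℝ) ^ (m + 1) * (2 / 3 : ℝ) ^ (n - m + 1) * hchooseR

noncomputable def centralBound (d : ℕ) : ℝ :=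
  d * binomTerm (d - 1) (d / 2)

theorem aCoef_eq_sum_binomTerm (d : ℕ) :
    aCoef d = d / 3 * ∑ i ∈ Icc (d / 2) d, binomTerm (d - 1) i := by
  simp only [aCoef, binomTerm]; ring

theorem two_mul_aCoef_le (d : ℕ) : 2 * aCoef d ≤ 4 / 3 * centralBound d := by
  have htail := sum_Icc_le_two_mul_of_succ_le_half (m := d / 2) (binomTerm_nonneg (d - 1))
    (fun i hi => binomTerm_succ_le_half (by omega)) d
  rw [aCoef_eq_sum_binomTerm, centralBound]
  calc 2 * (d / 3 * ∑ i ∈ Icc (d / 2) d, binomTerm (d - 1) i)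
      ≤ 2 * (d / 3 * (2 * binomTerm (d - 1) (d / 2))) := by gcongr
    _ = 4 / 3 * (d * binomTerm (d - 1) (d / 2)) := by ring

theorem centralBound_add_two_le {d : ℕ} (hd : 8 ≤ d) :
    centralBound (d + 2) ≤ centralBound d := by
  obtain ⟨n, rfl⟩ : ∃ n, d = n + 1 := ⟨d - 1, by omega⟩
  set m := (n + 1) / 2
  have hP : (n + 1) * (n + 3) ≤ 4 * ((m + 1) * (n + 1 - m)) := by
    rcases Nat.even_or_odd' n with ⟨q, rfl | rfl⟩
    · rw [show m = q by omega, show 2 * q + 1 - q = q + 1 by omega]; nlinarith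
    · rw [show m = q + 1 by omega, show 2 * q + 1 + 1 - (q + 1) = q + 1 by omega]; nlinarith
  have hPR : ((n : ℝ) + 1) * (n + 3) ≤ 4 * ((m + 1) * (n + 1 - m : ℕ)) := by exact_mod_cast hP
  have hPpos : (0 : ℝ) < (m + 1) * (n + 1 - m : ℕ) := by
    have : 0 < n + 1 - m := by omega
    positivity
  have hn : (7 : ℝ) ≤ n := by exact_mod_cast (by omega : 7 ≤ n)
  have key := binomTerm_add_two n m (by omega)
  have hY := binomTerm_nonneg n m
  rw [centralBound, centralBound, show (n + 1 + 2) / 2 = m + 1 by omega,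
    show n + 1 + 2 - 1 = n + 2 by omega, Nat.add_sub_cancel]
  push_cast
  refine le_of_mul_le_mul_right ?_ hPpos
  rw [mul_assoc, key]
  -- with `P = (m + 1)(n + 1 - m)` the step ratio is
  -- `2 (n + 3)(n + 2) / (9 P) ≤ 8 (n + 2) / (9 (n + 1)) ≤ 1`
  nlinarith [mul_nonneg hY (by linarith : (0 : ℝ) ≤ n - 7)]

theorem centralBound_add_two_mul_le {d : ℕ} (hd : 8 ≤ d) (j : ℕ) :
    centralBound (d + 2 * j) ≤ centralBound d := by
  induction j with
  | zero => rfl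
  | succ j ih =>
    rw [show d + 2 * (j + 1) = d + 2 * j + 2 by ring]
    exact (centralBound_add_two_le (by omega)).trans ih

theorem two_mul_aCoef_add_two_mul_le {d : ℕ} (hd : 8 ≤ d) (j : ℕ) :
    2 * aCoef (d + 2 * j) ≤ 4 / 3 * centralBound d :=
  (two_mul_aCoef_le _).trans (by gcongr; exact centralBound_add_two_mul_le hd j)

/-- `2·a_d < 0.98` for every even `d`, for `d = 1`, and for every odd `d ≥ 29`. -/
theorem two_aCoef_lt (d : ℕ) (h : Even d ∨ d = 1 ∨ (Odd d ∧ 29 ≤ d)) :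
    2 * aCoef d < 0.98 := by
  rcases h with ⟨k, rfl⟩ | rfl | ⟨⟨k, rfl⟩, hk⟩
  · rcases le_or_gt 12 k with hk12 | hk12
    · rw [show k + k = 24 + 2 * (k - 12) by omega]
      refine (two_mul_aCoef_add_two_mul_le (by norm_num) _).trans_lt ?_
      norm_num [centralBound, binomTerm, Nat.choose_eq_factorial_div_factorial]
    · interval_cases k <;>
        norm_num [aCoef, sum_Icc_succ_top, Nat.choose_eq_factorial_div_factorial]
  · norm_num [aCoef, sum_Icc_succ_top]
  · rcases le_or_gt 16 k with hk16 | hk16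
    · rw [show 2 * k + 1 = 33 + 2 * (k - 16) by omega]
      refine (two_mul_aCoef_add_two_mul_le (by norm_num) _).trans_lt ?_
      norm_num [centralBound, binomTerm, Nat.choose_eq_factorial_div_factorial]
    · obtain rfl | rfl : k = 14 ∨ k = 15 := by omega
      all_goals norm_num [aCoef, sum_Icc_succ_top, Nat.choose_eq_factorial_div_factorial]
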